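/- arXiv:2211.13475 — 4 statements merged into one kernel-verified Lean document; each statement's English description precedes it below -/
import Mathlib

section
/- Let h be a smooth vector-valued 1-form (endomorphism of the tangent bundle of a manifold N) which is a projector, h² = h, and define the curvature R(X,Y) = (1−h)[hX, hY] for vector fields X, Y. If hX and hY both lie in the nullity space of R (i.e. R(hX, Z) = 0 and R(hY, Z) = 0 for all Z), then R([hX,hY], Z) = 0 for all vector fields Z; i.e., the horizontal nullity space of R is involutive. -/
open scoped Manifold

local notation "∞" => (⊤ : ℕ∞)

variable {E : Type*} [NormedAddCommGroup E] [NormedSpace ℝ E]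
  {H : Type*} [TopologicalSpace H] {I : ModelWithCorners ℝ E H}
  {N : Type*} [TopologicalSpace N] [ChartedSpace H N] [IsManifold I ∞ N]

local notation "χ" => Derivation ℝ C^∞⟮I, N; ℝ⟯ C^∞⟮I, N; ℝ⟯

section CurvatureNullity

variable {L F : Type*} [LieRing L] [FunLike F L L]

/-- For a horizontal `A`, this says `R(A, Z) = v ⁅h A, h Z⁆ = 0` for all `Z`. -/
def IsCurvatureNull (h : F) (A : L) : Prop :=
  ∀ Z : L, ⁅A, h Z⁆ - h ⁅A, h Z⁆ = 0

theorem IsCurvatureNull.map_lie {h : F} {A : L} (hA : IsCurvatureNull h A) (Z : L) :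
    h ⁅A, h Z⁆ = ⁅A, h Z⁆ :=
  (sub_eq_zero.mp (hA Z)).symm

/-- By Jacobi, `⁅⁅A, B⁆, h Z⁆ = ⁅A, ⁅B, h Z⁆⁆ - ⁅B, ⁅A, h Z⁆⁆`, and the inner brackets are
themselves values of `h`. -/
theorem IsCurvatureNull.lie [AddMonoidHomClass F L L] {h : F} {A B : L}
    (hA : IsCurvatureNull h A) (hB : IsCurvatureNull h B) : IsCurvatureNull h ⁅A, B⁆ := by
  intro Z
  have hAB : h ⁅A, ⁅B, h Z⁆⁆ = ⁅A, ⁅B, h Z⁆⁆ := by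
    simpa only [hB.map_lie Z] using hA.map_lie ⁅B, h Z⁆
  have hBA : h ⁅B, ⁅A, h Z⁆⁆ = ⁅B, ⁅A, h Z⁆⁆ := by
    simpa only [hA.map_lie Z] using hB.map_lie ⁅A, h Z⁆
  rw [lie_lie, map_sub, hAB, hBA, sub_self]

end CurvatureNullity

theorem horizontal_nullity_space_involutive_general
    (h : χ →ₗ[C^∞⟮I, N; ℝ⟯] χ)
    (X Y : χ)
    (hX : ∀ Z : χ, ⁅h X, h Z⁆ - h ⁅h X, h Z⁆ = 0)
    (hY : ∀ Z : χ, ⁅h Y, h Z⁆ - h ⁅h Y, h Z⁆ = 0) :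
    ∀ Z : χ, ⁅h ⁅h X, h Y⁆, h Z⁆ - h ⁅h ⁅h X, h Y⁆, h Z⁆ = 0 := by
  have hXY : h ⁅h X, h Y⁆ = ⁅h X, h Y⁆ := IsCurvatureNull.map_lie hX Y
  rw [hXY]
  exact IsCurvatureNull.lie hX hY

/-- for a smooth projector field `h` on vector fields with curvature
`R(X,Y) = v ⁅h X, h Y⁆` (where `v = id - h`), if `h X` and `h Y` lie in the nullity space of
`R` then so does `⁅h X, h Y⁆`: the horizontal nullity space of the curvature is involutive. -/
theorem horizontal_nullity_space_involutive
    (h : χ →ₗ[C^∞⟮I, N; ℝ⟯] χ) (hproj : ∀ X : χ, h (h X) = h X)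
    (X Y : χ)
    (hX : ∀ Z : χ, ⁅h X, h Z⁆ - h ⁅h X, h Z⁆ = 0)
    (hY : ∀ Z : χ, ⁅h Y, h Z⁆ - h ⁅h Y, h Z⁆ = 0) :
    ∀ Z : χ, ⁅h ⁅h X, h Y⁆, h Z⁆ - h ⁅h ⁅h X, h Y⁆, h Z⁆ = 0 :=
  horizontal_nullity_space_involutive_general h X Y hX hY
end

section
/- Suppose X and Y are vector fields in a commutative ideal of A_h = {Z : [Z,h] = 0} (so [X,Y] = 0 and [X,h] = [Y,h] = 0), where h is a projector with curvature R. Then [X, R(Y,Z)] = R(Y, [X,Z]) for all vector fields Z. -/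
open scoped Manifold

local notation "∞" => (⊤ : ℕ∞)

variable {E : Type*} [NormedAddCommGroup E] [NormedSpace ℝ E]
  {H : Type*} [TopologicalSpace H] {I : ModelWithCorners ℝ E H}
  {N : Type*} [TopologicalSpace N] [ChartedSpace H N] [IsManifold I ∞ N]

/-- Smooth vector fields on `N`, as derivations of the algebra of smooth functions. -/
local notation "χ" => Derivation ℝ C^∞⟮I, N; ℝ⟯ C^∞⟮I, N; ℝ⟯

namespace LieRing

variable {L : Type*} [LieRing L]

def curvature (h : L →+ L) (Y Z : L) : L :=
  ⁅h Y, h Z⁆ - h ⁅h Y, h Z⁆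

variable {h : L →+ L} {X Y : L}

theorem lie_map_eq_zero (hX : ∀ W, ⁅X, h W⁆ = h ⁅X, W⁆) (hXY : ⁅X, Y⁆ = 0) :
    ⁅X, h Y⁆ = 0 := by
  rw [hX, hXY, map_zero]

theorem lie_lie_map_map (hX : ∀ W, ⁅X, h W⁆ = h ⁅X, W⁆) (hXY : ⁅X, Y⁆ = 0) (Z : L) :
    ⁅X, ⁅h Y, h Z⁆⁆ = ⁅h Y, h ⁅X, Z⁆⁆ := by
  rw [leibniz_lie, lie_map_eq_zero hX hXY, zero_lie, zero_add, hX]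

theorem lie_curvature (hX : ∀ W, ⁅X, h W⁆ = h ⁅X, W⁆) (hXY : ⁅X, Y⁆ = 0) (Z : L) :
    ⁅X, curvature h Y Z⁆ = curvature h Y ⁅X, Z⁆ := by
  rw [curvature, curvature, lie_sub, hX, lie_lie_map_map hX hXY]

end LieRing

theorem lieDeriv_curvature_commutative_ideal_general
    (h : χ →ₗ[C^∞⟮I, N; ℝ⟯] χ)
    (X Y : χ)
    (hX : ∀ W, ⁅X, h W⁆ = h ⁅X, W⁆)
    (hXY : ⁅X, Y⁆ = 0) :
    ∀ Z : χ, ⁅X, ⁅h Y, h Z⁆ - h ⁅h Y, h Z⁆⁆ = ⁅h Y, h ⁅X, Z⁆⁆ - h ⁅h Y, h ⁅X, Z⁆⁆ :=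
  LieRing.lie_curvature (h := h.toAddMonoidHom) hX hXY

/-- if `X` and `Y` belong to a commutative ideal of
`A_h = {Z : ⁅Z, h W⁆ = h ⁅Z, W⁆ ∀ W}` (so `[X,h] = [Y,h] = 0` and `⁅X, Y⁆ = 0`), then for the
curvature `R(Y,Z) = v ⁅h Y, h Z⁆`, `v = id - h`, one has `⁅X, R(Y,Z)⁆ = R(Y, ⁅X, Z⁆)` for all
vector fields `Z`. -/
theorem lieDeriv_curvature_commutative_ideal
    (h : χ →ₗ[C^∞⟮I, N; ℝ⟯] χ) (hproj : ∀ X : χ, h (h X) = h X)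
    (X Y : χ)
    (hX : ∀ W, ⁅X, h W⁆ = h ⁅X, W⁆)
    (hY : ∀ W, ⁅Y, h W⁆ = h ⁅Y, W⁆)
    (hXY : ⁅X, Y⁆ = 0) :
    ∀ Z : χ, ⁅X, ⁅h Y, h Z⁆ - h ⁅h Y, h Z⁆⁆ = ⁅h Y, h ⁅X, Z⁆⁆ - h ⁅h Y, h ⁅X, Z⁆⁆ :=
  lieDeriv_curvature_commutative_ideal_general h X Y hX hXY
end

section
/- Every finite-dimensional Lie algebra 𝔤 over a field of characteristic zero with 𝔤 = [𝔤,𝔤] and semisimple adjoint representation is semisimple. -/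
/-!
When every ideal has a complement, an abelian ideal `I` commutes both with itself and with its
complement, hence is central. If moreover `𝔤 = [𝔤, 𝔤]`, writing `𝔤 = 𝔷 ⊕ J` with `𝔷` the center
gives `𝔤 = [𝔷 ⊕ J, 𝔤] ⊆ J`, so `𝔷 = 0`. Thus every minimal ideal is non-abelian, hence equal to
its derived ideal; since distinct minimal ideals commute, a minimal ideal lying in the sum of the
others would be its own bracket with that sum, which is zero. So the minimal ideals are
independent, and they span `𝔤` because the lattice of ideals is complemented.
-/

namespace LieSubmodule

variable {R L M : Type*} [CommRing R] [LieRing L] [LieAlgebra R L]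
  [AddCommGroup M] [Module R M] [LieRingModule L M]

theorem lie_sSup_eq_bot {I : LieIdeal R L} {S : Set (LieSubmodule R L M)}
    (h : ∀ N ∈ S, ⁅I, N⁆ = ⊥) : ⁅I, sSup S⁆ = ⊥ := by
  rw [lie_eq_bot_iff]
  intro x hx m hm
  rw [sSup_eq_iSup'] at hm
  refine iSup_induction (motive := fun m ↦ ⁅x, m⁆ = 0) _ hm ?_ (lie_zero x) ?_
  · rintro ⟨N, hN⟩ m hmN
    exact (lie_eq_bot_iff N I).mp (h N hN) x hx m hmN
  · intro m₁ m₂ h₁ h₂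
    rw [lie_add, h₁, h₂, add_zero]

end LieSubmodule

namespace LieIdeal

variable {R L : Type*} [CommRing R] [LieRing L] [LieAlgebra R L]

theorem lie_eq_bot_of_disjoint {I J : LieIdeal R L} (h : Disjoint I J) : ⁅I, J⁆ = ⊥ :=
  eq_bot_iff.mpr ((LieSubmodule.lie_le_inf I J).trans h.le_bot)

theorem lie_self_eq_self_of_isAtom {I : LieIdeal R L} (hI : IsAtom I) (hab : ¬IsLieAbelian I) :
    ⁅I, I⁆ = I :=
  (hI.le_iff.mp (LieSubmodule.lie_le_left I I)).resolve_left
    (mt (LieSubmodule.lie_abelian_iff_lie_self_eq_bot I).mpr hab)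

theorem le_center_of_isLieAbelian [ComplementedLattice (LieIdeal R L)] (I : LieIdeal R L)
    [IsLieAbelian I] : I ≤ LieAlgebra.center R L := by
  obtain ⟨J, hJ⟩ := exists_isCompl I
  rw [LieModule.le_max_triv_iff_bracket_eq_bot, ← hJ.sup_eq_top, LieSubmodule.sup_lie,
    (LieSubmodule.lie_abelian_iff_lie_self_eq_bot I).mp inferInstance,
    lie_eq_bot_of_disjoint hJ.disjoint.symm, sup_bot_eq]

end LieIdeal

namespace LieAlgebra

variable {R L : Type*} [CommRing R] [LieRing L] [LieAlgebra R L]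

theorem sSupIndep_isAtom_of_lie_self_eq_self (h : ∀ I : LieIdeal R L, IsAtom I → ⁅I, I⁆ = I) :
    sSupIndep {I : LieIdeal R L | IsAtom I} := by
  intro I hI
  rw [← hI.not_le_iff_disjoint]
  intro hle
  have hcomm : ⁅I, sSup ({J : LieIdeal R L | IsAtom J} \ {I})⁆ = ⊥ :=
    LieSubmodule.lie_sSup_eq_bot fun J ⟨hJ, hJI⟩ ↦
      LieIdeal.lie_eq_bot_of_disjoint (hI.disjoint_of_ne hJ (Ne.symm hJI))
  apply hI.ne_bot
  rw [← le_bot_iff, ← hcomm]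
  calc I = ⁅I, I⁆ := (h I hI).symm
    _ ≤ _ := LieSubmodule.mono_lie_right I hle

variable [ComplementedLattice (LieIdeal R L)]

theorem center_eq_bot_of_lie_top_eq_top (h : ⁅(⊤ : LieIdeal R L), (⊤ : LieIdeal R L)⁆ = ⊤) :
    center R L = ⊥ := by
  obtain ⟨J, hJ⟩ := exists_isCompl (center R L)
  have hcenter_lie : ⁅center R L, (⊤ : LieIdeal R L)⁆ = ⊥ := by
    rw [LieSubmodule.lie_comm]
    exact LieModule.ideal_oper_maxTrivSubmodule_eq_bot R L L ⊤
  have hJ_top : J = ⊤ := by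
    refine top_le_iff.mp ?_
    calc (⊤ : LieIdeal R L) = ⁅center R L ⊔ J, ⊤⁆ := by rw [hJ.sup_eq_top, h]
      _ = ⁅J, ⊤⁆ := by rw [LieSubmodule.sup_lie, hcenter_lie, bot_sup_eq]
      _ ≤ J := LieSubmodule.lie_le_left J ⊤
  simpa [hJ_top] using hJ.inf_eq_bot

theorem isSemisimple_of_center_eq_bot (h : center R L = ⊥) : IsSemisimple R L := by
  have non_abelian : ∀ I : LieIdeal R L, IsAtom I → ¬IsLieAbelian I := fun I hI _ ↦
    hI.ne_bot (eq_bot_iff.mpr (h ▸ LieIdeal.le_center_of_isLieAbelian I))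
  exact ⟨sSup_atoms_eq_top,
    sSupIndep_isAtom_of_lie_self_eq_self fun I hI ↦
      LieIdeal.lie_self_eq_self_of_isAtom hI (non_abelian I hI),
    non_abelian⟩

end LieAlgebra

theorem isSemisimple_of_perfect_of_adjoint_semisimple_general
    (K : Type*) [Field K]
    (L : Type*) [LieRing L] [LieAlgebra K L]
    (hperf : ⁅(⊤ : LieIdeal K L), (⊤ : LieIdeal K L)⁆ = ⊤)
    (hss : ComplementedLattice (LieSubmodule K L L)) :
    LieAlgebra.IsSemisimple K L :=
  LieAlgebra.isSemisimple_of_center_eq_bot (LieAlgebra.center_eq_bot_of_lie_top_eq_top hperf)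

/-- A finite-dimensional Lie algebra over a field of characteristic zero which is
perfect (`⁅L, L⁆ = L`) and whose adjoint representation is semisimple, is semisimple. -/
theorem isSemisimple_of_perfect_of_adjoint_semisimple
    (K : Type*) [Field K] [CharZero K]
    (L : Type*) [LieRing L] [LieAlgebra K L] [Module.Finite K L]
    (hperf : ⁅(⊤ : LieIdeal K L), (⊤ : LieIdeal K L)⁆ = ⊤)
    (hss : ComplementedLattice (LieSubmodule K L L)) :
    LieAlgebra.IsSemisimple K L :=
  isSemisimple_of_perfect_of_adjoint_semisimple_general K L hperf hss
end

section
/- Let 𝔤 be a finite-dimensional Lie algebra over a field of characteristic zero such that every derivation is inner. If 𝔤 has a direct-sum decomposition into ideals 𝔤 = 𝔰 ⊕ I with I abelian, I ≠ 0, and 𝔰 = [𝔤,𝔤], then there exists a derivation of 𝔤 with nonzero trace and every inner derivation has trace zero, yielding a contradiction; hence I = 0. -/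
/-!
The projection `p` of `L` onto `i` along `s` is a derivation: it kills `⁅L, L⁆ = s`, and its
values lie in `i`, which is central because `⁅s, i⁆ = ⁅i, i⁆ = 0`, so both sides of the Leibniz
rule vanish. If `p = ad x`, then every `y ∈ i` satisfies `y = p y = ⁅x, y⁆ = 0`.
-/

section

variable {R L : Type*} [CommRing R] [LieRing L] [LieAlgebra R L]

namespace LieDerivation

def ofCentralOfLieEqZero (p : L →ₗ[R] L) (hlie : ∀ a b : L, p ⁅a, b⁆ = 0)
    (hcentral : ∀ a b : L, ⁅a, p b⁆ = 0) : LieDerivation R L L where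
  toLinearMap := p
  leibniz' a b := by rw [hlie, hcentral, hcentral, sub_zero]

end LieDerivation

namespace LieIdeal

theorem top_lie_eq_bot_of_sup_eq_top {s i : LieIdeal R L} (hsup : s ⊔ i = ⊤)
    (habel : IsLieAbelian i) (hsi : ⁅s, i⁆ = ⊥) : ⁅(⊤ : LieIdeal R L), i⁆ = ⊥ := by
  rw [← hsup, LieSubmodule.sup_lie, hsi, (LieSubmodule.lie_abelian_iff_lie_self_eq_bot i).mp habel,
    bot_sup_eq]

theorem eq_bot_of_isCompl_of_forall_derivation_inner
    (hinner : ∀ D : LieDerivation R L L, ∃ x : L, ∀ y : L, D y = ⁅x, y⁆)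
    {s i : LieIdeal R L} (hcompl : IsCompl s i) (hcentral : ⁅(⊤ : LieIdeal R L), i⁆ = ⊥)
    (hderived : ⁅(⊤ : LieIdeal R L), (⊤ : LieIdeal R L)⁆ ≤ s) : i = ⊥ := by
  have hcompl' : IsCompl (i : Submodule R L) s :=
    (LieSubmodule.isCompl_toSubmodule.mpr hcompl).symm
  have hi_central : ∀ a : L, ∀ b ∈ i, ⁅a, b⁆ = 0 :=
    fun a => (LieSubmodule.lie_eq_bot_iff _ _).mp hcentral a (LieSubmodule.mem_top a)
  set p := (i : Submodule R L).projection s hcompl'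
  obtain ⟨x, hx⟩ := hinner <| LieDerivation.ofCentralOfLieEqZero p
    (fun a b => Submodule.projection_apply_of_mem_right hcompl'
      (hderived (LieSubmodule.lie_mem_lie (LieSubmodule.mem_top a) (LieSubmodule.mem_top b))))
    (fun a b => hi_central a _ (Submodule.projection_apply_mem hcompl' b))
  refine (LieSubmodule.eq_bot_iff i).mpr fun y hy => ?_
  calc y = p y := (Submodule.projection_apply_of_mem_left hcompl' hy).symm
    _ = ⁅x, y⁆ := hx y
    _ = 0 := hi_central x y hy

end LieIdeal

end

theorem abelian_complement_of_derived_ideal_trivial_of_inner_derivations_general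
    (K : Type*) [Field K]
    (L : Type*) [LieRing L] [LieAlgebra K L]
    (hinner : ∀ D : LieDerivation K L L, ∃ x : L, ∀ y : L, D y = ⁅x, y⁆)
    (s i : LieIdeal K L) (hcompl : IsCompl s i)
    (habel : IsLieAbelian i) (hsi : ⁅s, i⁆ = ⊥)
    (hder : s = ⁅(⊤ : LieIdeal K L), (⊤ : LieIdeal K L)⁆) :
    i = ⊥ :=
  LieIdeal.eq_bot_of_isCompl_of_forall_derivation_inner hinner hcompl
    (LieIdeal.top_lie_eq_bot_of_sup_eq_top hcompl.sup_eq_top habel hsi) hder.ge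

/-- Let `L` be a finite-dimensional Lie algebra over a field of characteristic
zero in which every derivation is inner. If `L = s ⊕ i` is a direct sum of Lie ideals with `i`
abelian, `⁅s, i⁆ = 0` and `s = ⁅L, L⁆`, then `i = 0` (otherwise the projection onto `i` would be
a derivation with nonzero trace, while every inner derivation has trace zero: a contradiction). -/
theorem abelian_complement_of_derived_ideal_trivial_of_inner_derivations
    (K : Type*) [Field K] [CharZero K]
    (L : Type*) [LieRing L] [LieAlgebra K L] [Module.Finite K L]
    (hinner : ∀ D : LieDerivation K L L, ∃ x : L, ∀ y : L, D y = ⁅x, y⁆)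
    (s i : LieIdeal K L) (hcompl : IsCompl s i)
    (habel : IsLieAbelian i) (hsi : ⁅s, i⁆ = ⊥)
    (hder : s = ⁅(⊤ : LieIdeal K L), (⊤ : LieIdeal K L)⁆) :
    i = ⊥ :=
  abelian_complement_of_derived_ideal_trivial_of_inner_derivations_general K L hinner s i hcompl
    habel hsi hder
end
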